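/- (Proposition P1) Suppose M(X) = Σ_{I⊆{1,…,m}} η_I² N_I (U + Bᵀ X B) N_I is invertible and set K̄_X = −Aᵀ X B N̄ M(X)⁻¹. Then φ(K̄_X, X) = Π_c(X), where Π_c(X) = Aᵀ X A + W − Aᵀ X B N̄ M(X)⁻¹ N̄ Bᵀ X A. -/
import Mathlib


open Matrix

/-- The scalar η_I = √(∏_{i∈I} ν̄ᵢ · ∏_{i∉I}(1−ν̄ᵢ)). -/
noncomputable def eta {m : ℕ} (ν : Fin m → ℝ) (I : Finset (Fin m)) : ℝ :=
  Real.sqrt ((∏ i ∈ I, ν i) * (∏ i ∈ Iᶜ, (1 - ν i)))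

/-- The m×m diagonal 0/1 matrix N_I whose i-th diagonal entry is 1 exactly when i ∈ I. -/
def NI {m : ℕ} (I : Finset (Fin m)) : Matrix (Fin m) (Fin m) ℝ :=
  Matrix.diagonal fun i => if i ∈ I then 1 else 0

/-- φ(K,X) = Σ_{I⊆{1,…,m}} η_I² (F_I(K) X F_I(K)ᵀ + V_I(K)), where
F_I(K) = Aᵀ + K N_I Bᵀ and V_I(K) = W + K N_I U N_I Kᵀ. -/
noncomputable def phi {m n : ℕ} (ν : Fin m → ℝ) (A W : Matrix (Fin n) (Fin n) ℝ)
    (B : Matrix (Fin n) (Fin m) ℝ) (U : Matrix (Fin m) (Fin m) ℝ)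
    (K : Matrix (Fin n) (Fin m) ℝ) (X : Matrix (Fin n) (Fin n) ℝ) :
    Matrix (Fin n) (Fin n) ℝ :=
  ∑ I : Finset (Fin m), (eta ν I) ^ 2 •
    ((Aᵀ + K * NI I * Bᵀ) * X * (Aᵀ + K * NI I * Bᵀ)ᵀ + (W + K * NI I * U * NI I * Kᵀ))

/-- M(X) = Σ_{I⊆{1,…,m}} η_I² N_I (U + Bᵀ X B) N_I. -/
noncomputable def Mop {m n : ℕ} (ν : Fin m → ℝ) (B : Matrix (Fin n) (Fin m) ℝ)
    (U : Matrix (Fin m) (Fin m) ℝ) (X : Matrix (Fin n) (Fin n) ℝ) :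
    Matrix (Fin m) (Fin m) ℝ :=
  ∑ I : Finset (Fin m), (eta ν I) ^ 2 • (NI I * (U + Bᵀ * X * B) * NI I)

/-- The modified algebraic Riccati operator
Π_c(X) = Aᵀ X A + W − Aᵀ X B N̄ M(X)⁻¹ N̄ Bᵀ X A, where N̄ = diag(ν̄₁,…,ν̄ₘ). -/
noncomputable def Pic {m n : ℕ} (ν : Fin m → ℝ) (A W : Matrix (Fin n) (Fin n) ℝ)
    (B : Matrix (Fin n) (Fin m) ℝ) (U : Matrix (Fin m) (Fin m) ℝ)
    (X : Matrix (Fin n) (Fin n) ℝ) : Matrix (Fin n) (Fin n) ℝ :=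
  Aᵀ * X * A + W -
    Aᵀ * X * B * Matrix.diagonal ν * (Mop ν B U X)⁻¹ * Matrix.diagonal ν * Bᵀ * X * A

lemma sum_prod_compl {m : ℕ} (f g : Fin m → ℝ) :
    ∑ I : Finset (Fin m), (∏ i ∈ I, f i) * ∏ i ∈ Iᶜ, g i = ∏ i, (f i + g i) := by
  rw [Finset.prod_add, ← Finset.powerset_univ]
  exact Finset.sum_congr rfl fun t _ => by rw [Finset.compl_eq_univ_sdiff]

lemma eta_sq' {m : ℕ} (ν : Fin m → ℝ) (hν : ∀ i, ν i ∈ Set.Icc (0:ℝ) 1)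
    (I : Finset (Fin m)) :
    (eta ν I) ^ 2 = (∏ i ∈ I, ν i) * (∏ i ∈ Iᶜ, (1 - ν i)) := by
  apply Real.sq_sqrt
  apply mul_nonneg
  · exact Finset.prod_nonneg fun i _ => (hν i).1
  · exact Finset.prod_nonneg fun i _ => by linarith [(hν i).2]

lemma sum_eta_sq {m : ℕ} (ν : Fin m → ℝ) (hν : ∀ i, ν i ∈ Set.Icc (0:ℝ) 1) :
    ∑ I : Finset (Fin m), (eta ν I) ^ 2 = 1 := by
  simp_rw [eta_sq' ν hν]
  rw [sum_prod_compl]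
  simp

lemma sum_eta_sq_ind {m : ℕ} (ν : Fin m → ℝ) (hν : ∀ i, ν i ∈ Set.Icc (0:ℝ) 1)
    (j : Fin m) :
    ∑ I : Finset (Fin m), (eta ν I) ^ 2 * (if j ∈ I then (1:ℝ) else 0) = ν j := by
  simp_rw [eta_sq' ν hν]
  have key : ∀ I : Finset (Fin m),
      ((∏ i ∈ I, ν i) * (∏ i ∈ Iᶜ, (1 - ν i))) * (if j ∈ I then (1:ℝ) else 0)
        = (∏ i ∈ I, ν i) * ∏ i ∈ Iᶜ, (if i = j then 0 else 1 - ν i) := by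
    intro I
    by_cases h : j ∈ I
    · simp only [h, if_true, mul_one]
      congr 1
      apply Finset.prod_congr rfl
      intro i hi
      have : i ≠ j := fun e => (Finset.mem_compl.mp hi) (e ▸ h)
      simp [this]
    · simp only [h, if_false, mul_zero]
      rw [eq_comm, mul_eq_zero]
      right
      exact Finset.prod_eq_zero (Finset.mem_compl.mpr h) (by simp)
  simp_rw [key]
  rw [sum_prod_compl]
  rw [Finset.prod_eq_single j]
  · simp
  · intro i _ hij; simp [hij]
  · simp

lemma sum_eta_sq_NI {m : ℕ} (ν : Fin m → ℝ) (hν : ∀ i, ν i ∈ Set.Icc (0:ℝ) 1) :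
    ∑ I : Finset (Fin m), (eta ν I) ^ 2 • NI I = Matrix.diagonal ν := by
  ext i j
  rw [Matrix.sum_apply]
  simp only [Matrix.smul_apply, NI, Matrix.diagonal_apply, smul_eq_mul]
  by_cases h : i = j
  · subst h
    simpa using sum_eta_sq_ind ν hν i
  · simp [h]


lemma sum_smul_mid {m n p q : ℕ} (c : Finset (Fin m) → ℝ)
    (f : Finset (Fin m) → Matrix (Fin p) (Fin p) ℝ)
    (P : Matrix (Fin n) (Fin p) ℝ) (Q : Matrix (Fin p) (Fin q) ℝ) :
    ∑ I : Finset (Fin m), c I • (P * f I * Q) = P * (∑ I : Finset (Fin m), c I • f I) * Q := by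
  rw [Matrix.mul_sum, Matrix.sum_mul]
  exact Finset.sum_congr rfl fun I _ => by simp [mul_smul_comm, smul_mul_assoc]

lemma expand_term {m n : ℕ} (A W X : Matrix (Fin n) (Fin n) ℝ) (B : Matrix (Fin n) (Fin m) ℝ)
    (U : Matrix (Fin m) (Fin m) ℝ) (K : Matrix (Fin n) (Fin m) ℝ) (I : Finset (Fin m)) :
    (Aᵀ + K * NI I * Bᵀ) * X * (Aᵀ + K * NI I * Bᵀ)ᵀ + (W + K * NI I * U * NI I * Kᵀ)
      = (Aᵀ * X * A + W) + (Aᵀ * X * B) * NI I * Kᵀ + K * NI I * (Bᵀ * X * A)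
        + K * (NI I * (U + Bᵀ * X * B) * NI I) * Kᵀ := by
  have hNT : (NI I)ᵀ = NI I := Matrix.diagonal_transpose _
  simp only [transpose_add, transpose_mul, transpose_transpose, hNT, Matrix.mul_add,
    Matrix.add_mul, Matrix.mul_assoc]
  abel

set_option maxHeartbeats 1000000 in

/-- Proposition P1: if M(X) is invertible and
K̄_X = −Aᵀ X B N̄ M(X)⁻¹, then φ(K̄_X, X) = Π_c(X). -/
theorem phi_Kbar_eq_Pic (m n : ℕ) (hm : 0 < m) (hn : 0 < n) (ν : Fin m → ℝ)
    (hν : ∀ i, ν i ∈ Set.Icc (0 : ℝ) 1)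
    (A W : Matrix (Fin n) (Fin n) ℝ) (B : Matrix (Fin n) (Fin m) ℝ)
    (U : Matrix (Fin m) (Fin m) ℝ) (X : Matrix (Fin n) (Fin n) ℝ)
    (hM : IsUnit (Mop ν B U X)) :
    phi ν A W B U (-(Aᵀ * X * B * Matrix.diagonal ν * (Mop ν B U X)⁻¹)) X =
      Pic ν A W B U X := by
  set D := Matrix.diagonal ν with hD
  set M := Mop ν B U X with hMdef
  set K := -(Aᵀ * X * B * D * M⁻¹) with hK
  unfold phi
  simp_rw [expand_term A W X B U K, smul_add, Finset.sum_add_distrib]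
  rw [sum_smul_mid (fun I => eta ν I ^ 2) NI (Aᵀ * X * B) Kᵀ,
      sum_smul_mid (fun I => eta ν I ^ 2) NI K (Bᵀ * X * A),
      sum_smul_mid (fun I => eta ν I ^ 2) (fun I => NI I * (U + Bᵀ * X * B) * NI I) K Kᵀ,
      sum_eta_sq_NI ν hν, ← hD]
  have hsum : (∑ I : Finset (Fin m), eta ν I ^ 2 • (NI I * (U + Bᵀ * X * B) * NI I)) = M := by
    rw [hMdef]; rfl
  rw [hsum]
  rw [← Finset.sum_smul, ← Finset.sum_smul, sum_eta_sq ν hν, one_smul, one_smul]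
  have hMdet : IsUnit M.det := (Matrix.isUnit_iff_isUnit_det M).mp hM
  have hinv : M⁻¹ * M = 1 := Matrix.nonsing_inv_mul M hMdet
  have e1 : K * M = -(Aᵀ * X * B * D) := by
    rw [hK, Matrix.neg_mul, Matrix.mul_assoc _ M⁻¹ M, hinv, Matrix.mul_one]
  rw [show K * M * Kᵀ = (K * M) * Kᵀ from rfl, e1]
  unfold Pic
  rw [← hMdef, ← hD, hK]
  simp only [Matrix.mul_assoc, Matrix.neg_mul, Matrix.mul_neg, sub_eq_add_neg]
  abel
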